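/- Let G be a finite simple graph whose tree-depth is at most t. Then the cycle matroid M(G) of G has a depth-decomposition of depth at most t; that is, the branch-depth of M(G) is at most the tree-depth of G. -/

import Mathlib

/-!
Common definitions: rooted trees (encoded by a parent function), their depth,
depth-decompositions of matroids, matroid rank, circuits, contraction,
connectivity and components.
-/

/-- `u` is an ancestor of `v` (or equal to it) in the rooted tree encoded by `parent`. -/
def Anc {V : Type} (parent : V → V) (u v : V) : Prop := ∃ n : ℕ, parent^[n] v = u

/-- `(root, parent)` encodes a rooted tree: the root is its own parent and every
vertex reaches the root by iterating `parent` (each non-root vertex is joined to its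
parent by an edge). -/
def IsRootedTree {V : Type} (root : V) (parent : V → V) : Prop :=
  parent root = root ∧ ∀ v : V, ∃ n : ℕ, parent^[n] v = root

/-- The depth of a vertex in a rooted tree: the number of edges on the path from the
root to the vertex. -/
noncomputable def vdepth {V : Type} (root : V) (parent : V → V) (v : V) : ℕ :=
  sInf {n : ℕ | parent^[n] v = root}

/-- The depth of a rooted tree: the maximum number of edges on a path from the root
to a leaf, i.e. the maximal depth of a vertex. -/
noncomputable def treeDepth {V : Type} (root : V) (parent : V → V) : ℕ :=
  sSup (Set.range (vdepth root parent))

/-- A leaf of a rooted tree: a vertex that is the parent of no other vertex. -/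
def IsLeaf {V : Type} (parent : V → V) (v : V) : Prop := ∀ u : V, u ≠ v → parent u ≠ v

/-- The rank of a set `X` in a matroid `M`: the largest size of an independent subset
of `X`. -/
noncomputable def mrank {α : Type} (M : Matroid α) (X : Set α) : ℕ :=
  sSup {n : ℕ | ∃ I : Set α, I ⊆ X ∧ M.Indep I ∧ I.ncard = n}

/-- `(root, parent, f)` is a depth-decomposition of the matroid `M`: the tree is finite,
the rank of `M` equals the number of edges of the tree (one edge per non-root vertex),
and the rank of any `X ⊆ M.E` is at most the number of edges of the union `T*(X)` of
the paths from the root to the vertices of `f(X)` (one edge per non-root vertex that is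
an ancestor of, or equal to, some vertex of `f(X)`). -/
def IsDepthDecomp {α V : Type} (M : Matroid α) (root : V) (parent : V → V)
    (f : α → V) : Prop :=
  Finite V ∧ IsRootedTree root parent ∧
  mrank M M.E = Set.ncard {v : V | v ≠ root} ∧
  ∀ X : Set α, X ⊆ M.E →
    mrank M X ≤ Set.ncard {v : V | v ≠ root ∧ ∃ e ∈ X, Anc parent v (f e)}

/-- `M` has a depth-decomposition of depth at most `d`. -/
def HasDepthDecompOfDepthLE {α : Type} (M : Matroid α) (d : ℕ) : Prop :=
  ∃ (V : Type) (root : V) (parent : V → V) (f : α → V),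
    IsDepthDecomp M root parent f ∧ treeDepth root parent ≤ d

/-- The branch-depth of a matroid: the smallest depth of a depth-decomposition. -/
noncomputable def branchDepth {α : Type} (M : Matroid α) : ℕ :=
  sInf {d : ℕ | HasDepthDecompOfDepthLE M d}

/-- A circuit of a matroid: a minimal dependent set. -/
def IsCircuitOf {α : Type} (M : Matroid α) (C : Set α) : Prop :=
  M.Dep C ∧ ∀ D : Set α, M.Dep D → D ⊆ C → D = C

/-- `N` is the contraction `M / F` of the matroid `M` by the set `F`: the ground set of
`N` is `M.E \ F`, and a set `I` disjoint from `F` is independent in `N` if and only if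
`r(F ∪ I) = r(F) + |I|`. -/
def IsContractionBy {α : Type} (M : Matroid α) (F : Set α) (N : Matroid α) : Prop :=
  N.E = M.E \ F ∧
  ∀ I : Set α, N.Indep I ↔
    I ⊆ M.E \ F ∧ I.Finite ∧ mrank M (F ∪ I) = mrank M F + I.ncard

/-- A matroid is connected if its ground set is nonempty and any two distinct elements
lie in a common circuit. -/
def IsConnectedM {α : Type} (M : Matroid α) : Prop :=
  M.E.Nonempty ∧
  ∀ x ∈ M.E, ∀ y ∈ M.E, x = y ∨ ∃ C : Set α, IsCircuitOf M C ∧ x ∈ C ∧ y ∈ C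

/-- A component of a matroid: an equivalence class of the relation "equal or lying in a
common circuit" on the ground set. -/
def IsComponentOf {α : Type} (M : Matroid α) (K : Set α) : Prop :=
  ∃ x ∈ M.E,
    K = {y ∈ M.E | x = y ∨ ∃ C : Set α, IsCircuitOf M C ∧ x ∈ C ∧ y ∈ C}

/-- `(root, parent)` is a tree-depth decomposition of the graph `G`: a rooted tree on the
vertex set of `G` such that every edge of `G` joins two vertices one of which is an
ancestor of the other. -/
def IsTreeDepthDecompOf {W : Type} (G : SimpleGraph W) (root : W) (parent : W → W) :
    Prop :=
  IsRootedTree root parent ∧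
  ∀ u v : W, G.Adj u v → Anc parent u v ∨ Anc parent v u

/-- The tree-depth of a graph: the smallest depth of a rooted tree on its vertex set in
which the two endpoints of every edge are ancestor-related. -/
noncomputable def graphTreeDepth {W : Type} (G : SimpleGraph W) : ℕ :=
  sInf {t : ℕ | ∃ (root : W) (parent : W → W),
    IsTreeDepthDecompOf G root parent ∧ treeDepth root parent = t}

/-- `M` is the cycle matroid of the graph `G`: its ground set is the edge set of `G` and
its independent sets are exactly the acyclic sets of edges of `G`. -/
def IsCycleMatroidOf {W : Type} (M : Matroid (Sym2 W)) (G : SimpleGraph W) : Prop :=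
  M.E = G.edgeSet ∧
  ∀ I : Set (Sym2 W), M.Indep I ↔ I ⊆ G.edgeSet ∧ (SimpleGraph.fromEdgeSet I).IsAcyclic

/-!
Fix a tree-depth decomposition `(root, p)` of `G`. As every edge joins ancestor-related vertices,
the shallowest vertex of each component of `G` is an ancestor of the whole component; call the
other vertices non-top. Oriented away from these tops, a forest has exactly one edge entering each
non-top vertex, so the rank of `M(G)` is the number of non-top vertices of `G`.

The depth-decomposition keeps the non-top vertices, hangs each of them below its nearest
`p`-ancestor among them in its component (or below a new root), which does not increase depths,
and sends an edge to its deeper endpoint. An independent `I ⊆ X` is a forest whose non-top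
vertices are endpoints of edges of `X`, and a non-top endpoint of an edge lies on the path from
the root to the image of that edge; hence `r(X) ≤ |T*(X)|`.
-/

section RootedTree

variable {V : Type} {root : V} {p : V → V}

theorem Function.iterate_eq_of_isFixedPt_of_le {f : V → V} {r v : V} {n m : ℕ}
    (hr : f r = r) (hn : f^[n] v = r) (hnm : n ≤ m) : f^[m] v = r := by
  rw [← Nat.sub_add_cancel hnm, Function.iterate_add_apply, hn, Function.iterate_fixed hr]

theorem Anc.refl (p : V → V) (v : V) : Anc p v v := ⟨0, rfl⟩

theorem Anc.trans {u v w : V} (huv : Anc p u v) (hvw : Anc p v w) : Anc p u w := by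
  obtain ⟨n, hn⟩ := huv
  obtain ⟨m, hm⟩ := hvw
  exact ⟨n + m, by rw [Function.iterate_add_apply, hm, hn]⟩

theorem Anc.total_of_anc {a b c : V} (hac : Anc p a c) (hbc : Anc p b c) :
    Anc p a b ∨ Anc p b a := by
  obtain ⟨n, hn⟩ := hac
  obtain ⟨m, hm⟩ := hbc
  rcases le_total n m with h | h
  · exact Or.inr ⟨m - n, by rw [← hn, ← Function.iterate_add_apply, Nat.sub_add_cancel h, hm]⟩
  · exact Or.inl ⟨n - m, by rw [← hm, ← Function.iterate_add_apply, Nat.sub_add_cancel h, hn]⟩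

theorem Anc.eq_root (hrt : IsRootedTree root p) {u : V} (h : Anc p u root) : u = root := by
  obtain ⟨n, hn⟩ := h
  rw [← hn, Function.iterate_fixed hrt.1]

theorem iterate_vdepth (hrt : IsRootedTree root p) (v : V) :
    p^[vdepth root p v] v = root :=
  Nat.sInf_mem (hrt.2 v)

theorem vdepth_le_of_iterate_eq {v : V} {n : ℕ} (h : p^[n] v = root) : vdepth root p v ≤ n :=
  Nat.sInf_le h

theorem vdepth_root : vdepth root p root = 0 :=
  Nat.le_zero.mp (vdepth_le_of_iterate_eq rfl)

theorem vdepth_eq_zero_iff (hrt : IsRootedTree root p) {v : V} :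
    vdepth root p v = 0 ↔ v = root :=
  ⟨fun h => by simpa [h] using iterate_vdepth hrt v, fun h => h ▸ vdepth_root⟩

theorem Anc.vdepth_lt (hrt : IsRootedTree root p) {u v : V} (h : Anc p u v) (hne : u ≠ v) :
    vdepth root p u < vdepth root p v := by
  obtain ⟨n, rfl⟩ := h
  have hn : n ≠ 0 := by rintro rfl; exact hne rfl
  have hd := iterate_vdepth hrt v
  rcases le_or_gt (vdepth root p v) n with hle | hlt
  · rw [Function.iterate_eq_of_isFixedPt_of_le hrt.1 hd hle, vdepth_root]
    exact Nat.pos_of_ne_zero fun h0 => hne (by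
      rw [(vdepth_eq_zero_iff hrt).1 h0, Function.iterate_fixed hrt.1])
  · have : p^[vdepth root p v - n] (p^[n] v) = root := by
      rwa [← Function.iterate_add_apply, Nat.sub_add_cancel hlt.le]
    exact (vdepth_le_of_iterate_eq this).trans_lt (by omega)

theorem Anc.antisymm (hrt : IsRootedTree root p) {u v : V} (huv : Anc p u v) (hvu : Anc p v u) :
    u = v := by
  by_contra hne
  exact lt_asymm (huv.vdepth_lt hrt hne) (hvu.vdepth_lt hrt (Ne.symm hne))

theorem vdepth_le_treeDepth [Finite V] (v : V) : vdepth root p v ≤ treeDepth root p :=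
  le_csSup (Set.finite_range _).bddAbove ⟨v, rfl⟩

end RootedTree

section RestrictedTree

variable {V : Type} {root : V} {p : V → V} {S : Set V} {R : V → V → Prop}

open Classical in
noncomputable def restrictParent (p : V → V) (S : Set V) (R : V → V → Prop) :
    Option S → Option S
  | none => none
  | some x =>
    if h : ∃ k, p^[k] x ∈ S ∧ p^[k] x ≠ x ∧ R (p^[k] x) x then
      some ⟨p^[Nat.find h] x, (Nat.find_spec h).1⟩
    else none

theorem restrictParent_eq_some {x m : S} (h : restrictParent p S R (some x) = some m) :
    Anc p m x ∧ (m : V) ≠ x ∧ R m x ∧ ∀ u ∈ S, Anc p u x → u ≠ x → R u x → Anc p u m := by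
  classical
  simp only [restrictParent] at h
  split_ifs at h with hex
  obtain rfl := Option.some_injective _ h
  obtain ⟨-, hne, hR⟩ := Nat.find_spec hex
  refine ⟨⟨_, rfl⟩, hne, hR, ?_⟩
  rintro _ hu ⟨j, rfl⟩ hne' hR'
  have hle : Nat.find hex ≤ j := Nat.find_min' hex ⟨hu, hne', hR'⟩
  exact ⟨j - Nat.find hex, by rw [← Function.iterate_add_apply, Nat.sub_add_cancel hle]⟩

theorem restrictParent_eq_none {x : S} (h : restrictParent p S R (some x) = none) {u : V}
    (hu : u ∈ S) (hux : Anc p u x) (hne : u ≠ x) : ¬R u x := by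
  classical
  simp only [restrictParent] at h
  split_ifs at h with hex
  obtain ⟨k, rfl⟩ := hux
  exact fun hR => hex ⟨k, hu, hne, hR⟩

theorem restrictParent_iterate_vdepth (hrt : IsRootedTree root p) (hS : root ∉ S) (x : S) :
    (restrictParent p S R)^[vdepth root p x] (some x) = none := by
  induction hd : vdepth root p x using Nat.strong_induction_on generalizing x with
  | _ d ih =>
    obtain ⟨d, rfl⟩ : ∃ d', d = d' + 1 :=
      Nat.exists_eq_succ_of_ne_zero fun h0 => hS ((vdepth_eq_zero_iff hrt).1 (hd ▸ h0) ▸ x.2)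
    rw [Function.iterate_succ_apply]
    cases hx : restrictParent p S R (some x) with
    | none => exact Function.iterate_fixed rfl d
    | some m =>
      obtain ⟨hanc, hne, -⟩ := restrictParent_eq_some hx
      have hlt := hd ▸ hanc.vdepth_lt hrt hne
      exact Function.iterate_eq_of_isFixedPt_of_le rfl (ih _ hlt m rfl) (by omega)

theorem isRootedTree_restrictParent (hrt : IsRootedTree root p) (hS : root ∉ S) :
    IsRootedTree none (restrictParent p S R) :=
  ⟨rfl, fun
    | none => ⟨0, rfl⟩
    | some x => ⟨_, restrictParent_iterate_vdepth hrt hS x⟩⟩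

theorem treeDepth_restrictParent_le [Finite V] (hrt : IsRootedTree root p) (hS : root ∉ S) :
    treeDepth none (restrictParent p S R) ≤ treeDepth root p := by
  refine csSup_le (Set.range_nonempty _) ?_
  rintro _ ⟨_ | x, rfl⟩
  · exact vdepth_root.trans_le (Nat.zero_le _)
  · exact (vdepth_le_of_iterate_eq (restrictParent_iterate_vdepth hrt hS x)).trans
      (vdepth_le_treeDepth _)

theorem anc_restrictParent (hrt : IsRootedTree root p) (hR : Equivalence R) {u x : S}
    (hux : Anc p u x) (hRux : R u x) : Anc (restrictParent p S R) (some u) (some x) := by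
  induction hd : vdepth root p x using Nat.strong_induction_on generalizing x with
  | _ d ih =>
    by_cases hne : (u : V) = x
    · rw [Subtype.ext hne]
      exact Anc.refl _ _
    cases hx : restrictParent p S R (some x) with
    | none => exact absurd hRux (restrictParent_eq_none hx u.2 hux hne)
    | some m =>
      obtain ⟨hmx, hmne, hRmx, hnearest⟩ := restrictParent_eq_some hx
      have hlt := hd ▸ hmx.vdepth_lt hrt hmne
      exact (ih _ hlt (hnearest u u.2 hux hne hRux) (hR.trans hRux (hR.symm hRmx)) rfl).trans
        ⟨1, hx⟩

end RestrictedTree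

namespace Sym2

variable {V : Type} {r : V → V → Prop} {x y : V}

noncomputable def orientedHead (r : V → V → Prop) (e : Sym2 V) : V :=
  @Classical.epsilon V (Sym2.ind (fun x _ => ⟨x⟩) e) fun y => ∃ x, e = s(x, y) ∧ r x y

theorem exists_eq_orientedHead (h : r x y) :
    ∃ x', s(x, y) = s(x', orientedHead r s(x, y)) ∧ r x' (orientedHead r s(x, y)) :=
  Classical.epsilon_spec (p := fun y' => ∃ x', s(x, y) = s(x', y') ∧ r x' y') ⟨y, x, rfl, h⟩

theorem orientedHead_eq (h : r x y) (h' : ¬r y x) : orientedHead r s(x, y) = y := by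
  obtain ⟨x', he, hr⟩ := exists_eq_orientedHead h
  rcases Sym2.eq_iff.1 he with ⟨-, hy⟩ | ⟨hx, hy⟩
  · exact hy.symm
  · exact absurd (hx ▸ hy ▸ hr) h'

end Sym2

namespace SimpleGraph

variable {V : Type} {G H : SimpleGraph V}

theorem edgeSet_fromEdgeSet_of_subset_edgeSet {I : Set (Sym2 V)} (hI : I ⊆ G.edgeSet) :
    (fromEdgeSet I).edgeSet = I := by
  rw [edgeSet_fromEdgeSet, sdiff_eq_left, Set.disjoint_left]
  exact fun e he hdiag => G.not_isDiag_of_mem_edgeSet (hI he) hdiag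

theorem IsAcyclic.mem_support_of_adj_of_dist_lt (hH : H.IsAcyclic) {τ x y : V}
    {q : H.Walk τ y} (hq : q.IsPath) (hadj : H.Adj x y) (hd : H.dist τ x < H.dist τ y) :
    x ∈ q.support := by
  classical
  by_contra hx
  obtain ⟨r, hr, hrl⟩ := (q.reachable.trans hadj.symm.reachable).exists_path_of_dist
  have hy := hH.mem_support_of_ne_mem_support_of_adj_of_isPath hr hq hadj hx
  have := dist_le (r.takeUntil y hy)
  have := r.length_takeUntil_le_length hy
  omega

theorem IsAcyclic.eq_of_adj_of_dist_lt (hH : H.IsAcyclic) {τ x₁ x₂ y : V}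
    (hr : H.Reachable τ y) (h₁ : H.Adj x₁ y) (h₂ : H.Adj x₂ y)
    (hd₁ : H.dist τ x₁ < H.dist τ y) (hd₂ : H.dist τ x₂ < H.dist τ y) : x₁ = x₂ := by
  obtain ⟨q, hq, -⟩ := hr.exists_path_of_dist
  rw [hH.eq_penultimate_of_adj_end hq h₁.symm (hH.mem_support_of_adj_of_dist_lt hq h₁ hd₁),
    hH.eq_penultimate_of_adj_end hq h₂.symm (hH.mem_support_of_adj_of_dist_lt hq h₂ hd₂)]

theorem Reachable.exists_adj_dist_lt {τ v : V} (hr : H.Reachable τ v) (hne : τ ≠ v) :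
    ∃ x, H.Adj x v ∧ H.dist τ x < H.dist τ v := by
  obtain ⟨q, hql⟩ := hr.symm.exists_walk_length_eq_dist
  obtain ⟨x, hadj, q', rfl⟩ := Walk.not_nil_iff.1 (q.not_nil_of_ne hne.symm)
  refine ⟨x, hadj.symm, ?_⟩
  have := dist_le q'.reverse
  rw [Walk.length_reverse] at this
  rw [dist_comm (u := τ) (v := v), ← hql, Walk.length_cons]
  omega

/-- The forest formula `|E| = |V| - #components`: oriented away from the chosen roots `ρ v`,
every non-root vertex is the head of exactly one edge. -/
theorem IsAcyclic.ncard_edgeSet_eq [Finite V] (hH : H.IsAcyclic) {ρ : V → V}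
    (hρ : ∀ x y, H.Adj x y → ρ x = ρ y) (hρr : ∀ v, H.Reachable (ρ v) v) :
    H.edgeSet.ncard = {v | ρ v ≠ v}.ncard := by
  set r : V → V → Prop := fun x y => H.dist (ρ y) x < H.dist (ρ y) y
  have hhead : ∀ e ∈ H.edgeSet, ∃ x, e = s(x, e.orientedHead r) ∧ r x (e.orientedHead r) := by
    intro e he
    induction e using Sym2.ind with
    | _ x y =>
    rcases (hH.dist_ne_of_adj he (hρr x)).lt_or_gt with hlt | hlt
    · exact Sym2.exists_eq_orientedHead (r := r) (by simpa only [r, ← hρ x y he] using hlt)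
    · rw [Sym2.eq_swap]
      exact Sym2.exists_eq_orientedHead (r := r) hlt
  have hinj : Set.InjOn (Sym2.orientedHead r) H.edgeSet := by
    intro e₁ he₁ e₂ he₂ heq
    obtain ⟨x₁, he₁', hr₁⟩ := hhead e₁ he₁
    obtain ⟨x₂, he₂', hr₂⟩ := hhead e₂ he₂
    rw [← heq] at he₂' hr₂
    rw [he₁'] at he₁
    rw [he₂'] at he₂
    have hx : x₁ = x₂ := hH.eq_of_adj_of_dist_lt (hρr _) he₁ he₂ hr₁ hr₂
    rw [he₁', he₂', hx]
  have himage : Sym2.orientedHead r '' H.edgeSet = {v | ρ v ≠ v} := by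
    ext v
    constructor
    · rintro ⟨e, he, rfl⟩ hfix
      obtain ⟨x, -, hr⟩ := hhead e he
      simp only [r, hfix, dist_self, Nat.not_lt_zero] at hr
    · intro hv
      obtain ⟨x, hadj, hlt⟩ := (hρr v).exists_adj_dist_lt hv
      refine ⟨s(x, v), hadj, Sym2.orientedHead_eq hlt fun hvx => ?_⟩
      simp only [r, hρ x v hadj] at hvx
      exact lt_asymm hlt hvx
  rw [← himage, hinj.ncard_image]

end SimpleGraph

section TreeDepthDecomp

open SimpleGraph

variable {V : Type} {root : V} {p : V → V} {G H : SimpleGraph V}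

def nonTop (p : V → V) (H : SimpleGraph V) : Set V :=
  {v | ∃ u, Anc p u v ∧ u ≠ v ∧ H.Reachable u v}

theorem nonTop_mono (hle : H ≤ G) : nonTop p H ⊆ nonTop p G :=
  fun _ ⟨u, hanc, hne, hr⟩ => ⟨u, hanc, hne, hr.mono hle⟩

theorem root_not_mem_nonTop (hrt : IsRootedTree root p) : root ∉ nonTop p H :=
  fun ⟨_, hanc, hne, _⟩ => hne (hanc.eq_root hrt)

theorem exists_adj_of_mem_nonTop {v : V} (hv : v ∈ nonTop p H) : ∃ w, H.Adj v w := by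
  obtain ⟨u, -, hne, hr⟩ := hv
  obtain ⟨w, hadj, -⟩ := hr.exists_adj_dist_lt hne
  exact ⟨w, hadj.symm⟩

theorem IsTreeDepthDecompOf.mono (h : IsTreeDepthDecompOf G root p) (hle : H ≤ G) :
    IsTreeDepthDecompOf H root p :=
  ⟨h.1, fun u v huv => h.2 u v (hle huv)⟩

noncomputable def componentTop (root : V) (p : V → V) (c : H.ConnectedComponent) : V :=
  Function.argminOn (vdepth root p) c.supp c.nonempty_supp

/-- Walking from the shallowest vertex, each next vertex is ancestor-related to the current one
and cannot be shallower, so the walk stays below it. -/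
theorem IsTreeDepthDecompOf.anc_componentTop (h : IsTreeDepthDecompOf H root p)
    {c : H.ConnectedComponent} {v : V} (hv : v ∈ c.supp) : Anc p (componentTop root p c) v := by
  set τ := componentTop root p c
  have hτ : τ ∈ c.supp := Function.argminOn_mem _ _ _
  have key : ∀ {x y} (w : H.Walk x y), x ∈ c.supp → Anc p τ x → Anc p τ y := by
    intro x y w
    induction w with
    | nil => exact fun _ hx => hx
    | @cons a b _ hab _ ih =>
      intro ha hτa
      have hb : b ∈ c.supp := c.mem_supp_of_adj_mem_supp ha hab
      refine ih hb ?_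
      rcases h.2 a b hab with hab' | hba
      · exact hτa.trans hab'
      rcases hτa.total_of_anc hba with hτb | hbτ
      · exact hτb
      by_cases hbτ' : b = τ
      · exact hbτ' ▸ Anc.refl p b
      exact absurd (Function.argminOn_le (vdepth root p) c.supp hb)
        (not_le.2 (hbτ.vdepth_lt h.1 hbτ'))
  exact key (c.reachable_of_mem_supp hτ hv).some hτ (Anc.refl p τ)

theorem IsTreeDepthDecompOf.mem_nonTop_iff (h : IsTreeDepthDecompOf H root p) {v : V} :
    v ∈ nonTop p H ↔ componentTop root p (H.connectedComponentMk v) ≠ v := by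
  have hv : v ∈ (H.connectedComponentMk v).supp := rfl
  constructor
  · rintro ⟨u, hanc, hne, hr⟩ hτ
    have hu : u ∈ (H.connectedComponentMk v).supp := ConnectedComponent.sound hr
    exact hne (hanc.antisymm h.1 (hτ ▸ h.anc_componentTop hu))
  · intro hne
    have hτ : componentTop root p (H.connectedComponentMk v) ∈ (H.connectedComponentMk v).supp :=
      Function.argminOn_mem _ _ _
    exact ⟨_, h.anc_componentTop hv, hne, ConnectedComponent.reachable_of_mem_supp _ hτ hv⟩

theorem IsTreeDepthDecompOf.ncard_edgeSet [Finite V] (h : IsTreeDepthDecompOf H root p)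
    (hH : H.IsAcyclic) : H.edgeSet.ncard = (nonTop p H).ncard := by
  rw [hH.ncard_edgeSet_eq (ρ := fun v => componentTop root p (H.connectedComponentMk v))
    (fun x y hxy => by rw [ConnectedComponent.connectedComponentMk_eq_of_adj hxy])
    (fun v => ConnectedComponent.reachable_of_mem_supp _ (Function.argminOn_mem _ _ _) rfl)]
  congr 1
  ext v
  exact h.mem_nonTop_iff.symm

end TreeDepthDecomp

section CycleMatroid

open SimpleGraph

variable {V : Type} {root : V} {p : V → V} {G : SimpleGraph V} {M : Matroid (Sym2 V)}

theorem mrank_le_of_forall {α : Type} {M : Matroid α} {X : Set α} {n : ℕ}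
    (h : ∀ I ⊆ X, M.Indep I → I.ncard ≤ n) : mrank M X ≤ n :=
  csSup_le ⟨0, ∅, Set.empty_subset X, M.empty_indep, Set.ncard_empty _⟩
    fun _ ⟨I, hIX, hI, hn⟩ => hn ▸ h I hIX hI

theorem Matroid.Indep.ncard_le_mrank {α : Type} [Finite α] {M : Matroid α} {I X : Set α}
    (hI : M.Indep I) (hIX : I ⊆ X) : I.ncard ≤ mrank M X :=
  le_csSup ⟨Nat.card α, fun _ ⟨J, _, _, hn⟩ => hn ▸ Set.ncard_le_card J⟩ ⟨I, hIX, hI, rfl⟩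

noncomputable def deepEnd (p : V → V) (e : Sym2 V) : V :=
  Sym2.orientedHead (fun u v => Anc p u v ∧ u ≠ v) e

theorem deepEnd_eq (hrt : IsRootedTree root p) {u v : V} (h : Anc p u v) (hne : u ≠ v) :
    deepEnd p s(u, v) = v :=
  Sym2.orientedHead_eq ⟨h, hne⟩ fun ⟨h', _⟩ => hne (h.antisymm hrt h')

theorem Function.partialInv_val_of_mem {S : Set V} {v : V} (hv : v ∈ S) :
    Function.partialInv ((↑) : S → V) v = some ⟨v, hv⟩ :=
  Function.partialInv_left Subtype.val_injective ⟨v, hv⟩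

theorem IsTreeDepthDecompOf.anc_deepEnd (h : IsTreeDepthDecompOf G root p) {v w : V}
    (hadj : G.Adj v w) (hv : v ∈ nonTop p G) :
    Anc (restrictParent p (nonTop p G) G.Reachable) (some ⟨v, hv⟩)
      (Function.partialInv (↑) (deepEnd p s(v, w))) := by
  rcases h.2 v w hadj with hvw | hwv
  · have hw : w ∈ nonTop p G := ⟨v, hvw, hadj.ne, hadj.reachable⟩
    rw [deepEnd_eq h.1 hvw hadj.ne, Function.partialInv_val_of_mem hw]
    exact anc_restrictParent h.1 G.reachable_is_equivalence hvw hadj.reachable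
  · rw [Sym2.eq_swap, deepEnd_eq h.1 hwv hadj.ne.symm, Function.partialInv_val_of_mem hv]
    exact Anc.refl _ _

theorem IsTreeDepthDecompOf.mrank_le [Finite V] (h : IsTreeDepthDecompOf G root p)
    (hM : IsCycleMatroidOf M G) (X : Set (Sym2 V)) :
    mrank M X ≤ {v : Option (nonTop p G) | v ≠ none ∧ ∃ e ∈ X,
      Anc (restrictParent p (nonTop p G) G.Reachable) v
        (Function.partialInv (↑) (deepEnd p e))}.ncard := by
  refine mrank_le_of_forall fun I hIX hI => ?_
  obtain ⟨hIG, hac⟩ := (hM.2 I).1 hI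
  have hle : fromEdgeSet I ≤ G := (fromEdgeSet_le G).2 (Set.sdiff_subset.trans hIG)
  have hsub := nonTop_mono (p := p) hle
  calc I.ncard = (nonTop p (fromEdgeSet I)).ncard := by
        rw [← (h.mono hle).ncard_edgeSet hac, edgeSet_fromEdgeSet_of_subset_edgeSet hIG]
    _ ≤ _ := by
      refine Set.ncard_le_ncard_of_injOn (Function.partialInv (↑)) (fun v hv => ?_)
        (fun v₁ hv₁ v₂ hv₂ heq => ?_) (Set.toFinite _)
      · obtain ⟨w, hadj⟩ := exists_adj_of_mem_nonTop hv
        rw [Function.partialInv_val_of_mem (hsub hv)]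
        exact ⟨Option.some_ne_none _, s(v, w), hIX ((fromEdgeSet_adj I).1 hadj).1,
          h.anc_deepEnd (hle hadj) (hsub hv)⟩
      · rw [Function.partialInv_val_of_mem (hsub hv₁),
          Function.partialInv_val_of_mem (hsub hv₂)] at heq
        exact congrArg Subtype.val (Option.some_injective _ heq)

theorem IsTreeDepthDecompOf.ncard_nonTop_le_mrank [Finite V] (h : IsTreeDepthDecompOf G root p)
    (hM : IsCycleMatroidOf M G) : (nonTop p G).ncard ≤ mrank M M.E := by
  obtain ⟨F, hFG, hF, hreach⟩ := G.exists_isAcyclic_reachable_eq_le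
  have hI : M.Indep F.edgeSet :=
    (hM.2 _).2 ⟨edgeSet_mono hFG, (fromEdgeSet_edgeSet F).symm ▸ hF⟩
  calc (nonTop p G).ncard = (nonTop p F).ncard := by simp only [nonTop, hreach]
    _ = F.edgeSet.ncard := ((h.mono hFG).ncard_edgeSet hF).symm
    _ ≤ mrank M M.E := hI.ncard_le_mrank hI.subset_ground

theorem Option.ncard_setOf_ne_none {α : Type} : {v : Option α | v ≠ none}.ncard = Nat.card α := by
  rw [← Set.ncard_range_of_injective (Option.some_injective α)]
  congr 1
  ext v
  exact Option.ne_none_iff_exists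

theorem IsTreeDepthDecompOf.isDepthDecomp [Finite V] (h : IsTreeDepthDecompOf G root p)
    (hM : IsCycleMatroidOf M G) :
    IsDepthDecomp M none (restrictParent p (nonTop p G) G.Reachable)
      (fun e => Function.partialInv (↑) (deepEnd p e)) := by
  refine ⟨inferInstance, isRootedTree_restrictParent h.1 (root_not_mem_nonTop h.1),
    le_antisymm ?_ ?_, fun X _ => h.mrank_le hM X⟩
  · exact (h.mrank_le hM M.E).trans (Set.ncard_le_ncard fun v hv => hv.1)
  · rw [Option.ncard_setOf_ne_none, Nat.card_coe_set_eq]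
    exact h.ncard_nonTop_le_mrank hM

end CycleMatroid

/-- If a finite simple graph `G` has tree-depth at most `t`, then its
cycle matroid has a depth-decomposition of depth at most `t`; that is, the branch-depth
of `M(G)` is at most the tree-depth of `G`. -/
theorem cycleMatroid_branchDepth_le_treeDepth {W : Type} [Fintype W]
    (G : SimpleGraph W) (t : ℕ)
    (htd : ∃ (root : W) (parent : W → W),
      IsTreeDepthDecompOf G root parent ∧ treeDepth root parent ≤ t)
    (M : Matroid (Sym2 W)) (hM : IsCycleMatroidOf M G) :
    HasDepthDecompOfDepthLE M t := by
  obtain ⟨root, parent, h, hdepth⟩ := htd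
  exact ⟨_, none, _, _, h.isDepthDecomp hM,
    (treeDepth_restrictParent_le h.1 (root_not_mem_nonTop h.1)).trans hdepth⟩
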